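/- arXiv:1411.4559 — 2 statements merged into one kernel-verified Lean document; each statement's English description precedes it below -/
import Mathlib

section
/- Let (Ω, Σ) be a measurable space, H a complex Hilbert space, and E : Σ → B(H) an operator-valued probability measure (E(Ω) = I_H). Suppose E has a Hilbert dilation system: there exist a complex Hilbert space H̃, a projection-valued probability measure Ẽ : Σ → B(H̃), and bounded linear operators T : H → H̃ and S : H̃ → H with E(B) = S ∘ Ẽ(B) ∘ T for all B ∈ Σ. Then there exist a complex Hilbert space K, a linear isometry V : H → K, and a projection-valued probability measure F : Σ → B(K) such that E(B) = V* ∘ F(B) ∘ V for all B ∈ Σ. -/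
universe u v

/-- An operator-valued measure on a measurable space `(Ω, Σ)`: a map `E` from sets to
bounded operators that is countably additive (in the strong, equivalently weak, operator
topology) on measurable sets. -/
def IsOperatorValuedMeasure {Ω : Type v} [MeasurableSpace Ω]
    {X Y : Type*} [NormedAddCommGroup X] [NormedSpace ℂ X]
    [NormedAddCommGroup Y] [NormedSpace ℂ Y]
    (E : Set Ω → (X →L[ℂ] Y)) : Prop :=
  ∀ B : ℕ → Set Ω, (∀ i, MeasurableSet (B i)) → Pairwise (Function.onFun Disjoint B) →
    ∀ x : X, HasSum (fun i : ℕ => E (B i) x) (E (⋃ i, B i) x)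

/-- A projection-valued probability measure: an OVM `F` with `F(Ω) = I` and each `F(B)`
idempotent. -/
def IsProjectionValuedProbabilityMeasure {Ω : Type v} [MeasurableSpace Ω]
    {Z : Type*} [NormedAddCommGroup Z] [NormedSpace ℂ Z]
    (F : Set Ω → (Z →L[ℂ] Z)) : Prop :=
  IsOperatorValuedMeasure F ∧
  F Set.univ = ContinuousLinearMap.id ℂ Z ∧
  ∀ B : Set Ω, MeasurableSet B → (F B).comp (F B) = F B

/-!
Since `Ẽ(Ω) = I`, the hypothesis gives `S T = I`, so `C = [[0, S], [T, I - T S]]` is an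
involution of `H ⊕ H̃`. Let `D(B) = P(B) ⊕ Ẽ(B)` with `P` any projection-valued probability
measure on `H` (a point mass, or anything at all when `Ω = ∅`, since then `H̃ = 0` and so
`H = 0`). Then `F(B) = C D(B) C` is again a projection-valued probability measure, and as
`C (h, 0) = (0, T h)` while the first coordinate of `C (0, k)` is `S k`, compressing `F(B)` to
the first summand `H` recovers `S Ẽ(B) T = E(B)`.
-/

open ContinuousLinearMap

section Measures

variable {Ω : Type*} [MeasurableSpace Ω]

theorem hasSum_indicator_iUnion {ι α M : Type*} [AddCommMonoid M] [TopologicalSpace M]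
    {B : ι → Set α} (hB : Pairwise (Function.onFun Disjoint B)) (f : α → M) (a : α) :
    HasSum (fun i => (B i).indicator f a) ((⋃ i, B i).indicator f a) := by
  by_cases ha : a ∈ ⋃ i, B i
  · obtain ⟨i, hi⟩ := Set.mem_iUnion.mp ha
    rw [Set.indicator_of_mem ha, ← Set.indicator_of_mem hi f]
    refine hasSum_single i fun j hj => Set.indicator_of_notMem ?_ f
    exact Set.disjoint_left.mp (hB hj).symm hi
  · rw [Set.indicator_of_notMem ha]
    convert hasSum_zero with i
    exact Set.indicator_of_notMem (fun hi => ha (Set.mem_iUnion.mpr ⟨i, hi⟩)) f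

theorem IsOperatorValuedMeasure.map_empty {X Y : Type*} [NormedAddCommGroup X] [NormedSpace ℂ X]
    [NormedAddCommGroup Y] [NormedSpace ℂ Y] {E : Set Ω → (X →L[ℂ] Y)}
    (hE : IsOperatorValuedMeasure E) : E ∅ = 0 := by
  ext x
  have hsum : HasSum (fun _ : ℕ => E ∅ x) (E (⋃ _ : ℕ, ∅) x) :=
    hE (fun _ => ∅) (fun _ => .empty) (fun _ _ _ => Set.empty_disjoint _) x
  exact tendsto_const_nhds_iff.mp hsum.summable.tendsto_atTop_zero

theorem IsOperatorValuedMeasure.conj {Z W : Type*} [NormedAddCommGroup Z] [NormedSpace ℂ Z]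
    [NormedAddCommGroup W] [NormedSpace ℂ W] {F : Set Ω → (Z →L[ℂ] Z)}
    (hF : IsOperatorValuedMeasure F) (e : W ≃L[ℂ] Z) :
    IsOperatorValuedMeasure fun B => (e.symm : Z →L[ℂ] W) ∘L F B ∘L (e : W →L[ℂ] Z) :=
  fun B hB hdisj x => (hF B hB hdisj (e x)).mapL (e.symm : Z →L[ℂ] W)

variable {Z W : Type*} [NormedAddCommGroup Z] [NormedSpace ℂ Z]
  [NormedAddCommGroup W] [NormedSpace ℂ W]

theorem IsProjectionValuedProbabilityMeasure.subsingleton [IsEmpty Ω] {F : Set Ω → (Z →L[ℂ] Z)}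
    (hF : IsProjectionValuedProbabilityMeasure F) : Subsingleton Z := by
  have hid : ContinuousLinearMap.id ℂ Z = 0 := by
    rw [← hF.2.1, Set.univ_eq_empty_iff.mpr inferInstance, hF.1.map_empty]
  exact subsingleton_of_forall_eq 0 fun z => congr($hid z)

theorem isProjectionValuedProbabilityMeasure_of_subsingleton [Subsingleton Z]
    (F : Set Ω → (Z →L[ℂ] Z)) : IsProjectionValuedProbabilityMeasure F :=
  ⟨fun _ _ _ _ => by convert hasSum_zero, Subsingleton.elim _ _, fun _ _ => Subsingleton.elim _ _⟩

theorem isProjectionValuedProbabilityMeasure_indicator (ω₀ : Ω) :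
    IsProjectionValuedProbabilityMeasure fun B : Set Ω =>
      B.indicator (fun _ => ContinuousLinearMap.id ℂ Z) ω₀ := by
  refine ⟨fun B _ hdisj x => ?_, Set.indicator_of_mem (Set.mem_univ ω₀) _, fun B _ => ?_⟩
  · exact (hasSum_indicator_iUnion hdisj _ ω₀).mapL (apply ℂ Z x)
  · by_cases h : ω₀ ∈ B <;> simp [h]

theorem IsProjectionValuedProbabilityMeasure.prodMap {F : Set Ω → (Z →L[ℂ] Z)}
    {G : Set Ω → (W →L[ℂ] W)} (hF : IsProjectionValuedProbabilityMeasure F)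
    (hG : IsProjectionValuedProbabilityMeasure G) :
    IsProjectionValuedProbabilityMeasure fun B => (F B).prodMap (G B) := by
  refine ⟨fun B hB hdisj x => (hF.1 B hB hdisj x.1).prodMk (hG.1 B hB hdisj x.2), ?_,
    fun B hB => ?_⟩
  · ext x <;> simp [hF.2.1, hG.2.1]
  · exact ContinuousLinearMap.ext fun x =>
      Prod.ext congr($(hF.2.2 B hB) x.1) congr($(hG.2.2 B hB) x.2)

theorem IsProjectionValuedProbabilityMeasure.conj {F : Set Ω → (Z →L[ℂ] Z)}
    (hF : IsProjectionValuedProbabilityMeasure F) (e : W ≃L[ℂ] Z) :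
    IsProjectionValuedProbabilityMeasure fun B =>
      (e.symm : Z →L[ℂ] W) ∘L F B ∘L (e : W →L[ℂ] Z) := by
  refine ⟨hF.1.conj e, ?_, fun B hB => ?_⟩
  · ext x; simp [hF.2.1]
  · ext x; simp [← comp_apply (F B), hF.2.2 B hB]

end Measures

section Dilation

variable {𝕜 H L : Type*} [NontriviallyNormedField 𝕜] [NormedAddCommGroup H] [NormedSpace 𝕜 H]
  [NormedAddCommGroup L] [NormedSpace 𝕜 L] (S : L →L[𝕜] H) (T : H →L[𝕜] L)

def dilationInvolution : H × L →L[𝕜] H × L :=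
  (S ∘L snd 𝕜 H L).prod (T ∘L fst 𝕜 H L + snd 𝕜 H L - (T ∘L S) ∘L snd 𝕜 H L)

@[simp]
theorem dilationInvolution_apply (z : H × L) :
    dilationInvolution S T z = (S z.2, T z.1 + z.2 - T (S z.2)) :=
  rfl

variable {S T}

theorem dilationInvolution_involutive (hST : Function.LeftInverse S T) :
    Function.Involutive (dilationInvolution S T) := by
  rintro ⟨h, k⟩
  simp only [dilationInvolution_apply, map_add, map_sub, hST _, Prod.mk.injEq]
  constructor <;> abel

def dilationInvolutionEquiv (hST : Function.LeftInverse S T) : (H × L) ≃L[𝕜] (H × L) :=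
  .equivOfInverse _ _ (dilationInvolution_involutive hST) (dilationInvolution_involutive hST)

theorem fst_dilationInvolution_prodMap_dilationInvolution_inl (P : H →L[𝕜] H) (G : L →L[𝕜] L)
    (h : H) :
    (dilationInvolution S T (P.prodMap G (dilationInvolution S T (h, 0)))).1 = S (G (T h)) := by
  simp

end Dilation

section HilbertSum

variable {𝕜 H L : Type*} [RCLike 𝕜] [NormedAddCommGroup H] [InnerProductSpace 𝕜 H]
  [NormedAddCommGroup L] [InnerProductSpace 𝕜 L]

noncomputable def prodL2Inl : H →ₗᵢ[𝕜] WithLp 2 (H × L) where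
  toLinearMap := (WithLp.linearEquiv 2 𝕜 (H × L)).symm.toLinearMap ∘ₗ LinearMap.inl 𝕜 H L
  norm_map' := WithLp.norm_toLp_fst 2 H L

@[simp]
theorem prodL2Inl_apply (h : H) :
    (prodL2Inl (𝕜 := 𝕜) h : WithLp 2 (H × L)) = WithLp.toLp 2 (h, 0) :=
  rfl

theorem adjoint_prodL2Inl [CompleteSpace H] [CompleteSpace L] :
    adjoint (prodL2Inl : H →ₗᵢ[𝕜] WithLp 2 (H × L)).toContinuousLinearMap =
      fst 𝕜 H L ∘L (WithLp.prodContinuousLinearEquiv 2 𝕜 H L : WithLp 2 (H × L) →L[𝕜] H × L) := by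
  refine ((eq_adjoint_iff _ _).mpr fun x h => ?_).symm
  simp [WithLp.prod_inner_apply]

end HilbertSum

section IsometricDilation

variable {Ω : Type*} [MeasurableSpace Ω] {H L : Type*}
  [NormedAddCommGroup H] [NormedSpace ℂ H] [NormedAddCommGroup L] [NormedSpace ℂ L]
  {S : L →L[ℂ] H} {T : H →L[ℂ] L}

noncomputable def isometricDilation
    (hST : Function.LeftInverse S T) (P : Set Ω → (H →L[ℂ] H)) (G : Set Ω → (L →L[ℂ] L))
    (B : Set Ω) : WithLp 2 (H × L) →L[ℂ] WithLp 2 (H × L) :=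
  let C := (WithLp.prodContinuousLinearEquiv 2 ℂ H L).trans (dilationInvolutionEquiv hST)
  (C.symm : H × L →L[ℂ] WithLp 2 (H × L)) ∘L (P B).prodMap (G B) ∘L
    (C : WithLp 2 (H × L) →L[ℂ] H × L)

theorem isProjectionValuedProbabilityMeasure_isometricDilation
    (hST : Function.LeftInverse S T) {P : Set Ω → (H →L[ℂ] H)} {G : Set Ω → (L →L[ℂ] L)}
    (hP : IsProjectionValuedProbabilityMeasure P)
    (hG : IsProjectionValuedProbabilityMeasure G) :
    IsProjectionValuedProbabilityMeasure (isometricDilation hST P G) :=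
  (hP.prodMap hG).conj _

end IsometricDilation

theorem adjoint_prodL2Inl_comp_isometricDilation_comp_prodL2Inl {Ω : Type*} [MeasurableSpace Ω]
    {H L : Type*} [NormedAddCommGroup H] [InnerProductSpace ℂ H] [CompleteSpace H]
    [NormedAddCommGroup L] [InnerProductSpace ℂ L] [CompleteSpace L]
    {S : L →L[ℂ] H} {T : H →L[ℂ] L} (hST : Function.LeftInverse S T)
    (P : Set Ω → (H →L[ℂ] H)) (G : Set Ω → (L →L[ℂ] L)) (B : Set Ω) :
    adjoint (prodL2Inl : H →ₗᵢ[ℂ] WithLp 2 (H × L)).toContinuousLinearMap ∘L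
        isometricDilation hST P G B ∘L
          (prodL2Inl : H →ₗᵢ[ℂ] WithLp 2 (H × L)).toContinuousLinearMap =
      S ∘L G B ∘L T := by
  rw [adjoint_prodL2Inl]
  ext h
  exact fst_dilationInvolution_prodMap_dilationInvolution_inl (P B) (G B) h

theorem hilbert_dilation_improves_to_isometry_general
    {Ω : Type v} [MeasurableSpace Ω]
    {H : Type u} [NormedAddCommGroup H] [InnerProductSpace ℂ H] [CompleteSpace H]
    (E : Set Ω → (H →L[ℂ] H))
    (hprob : E Set.univ = ContinuousLinearMap.id ℂ H)
    (h_dil : ∃ (Ht : Type u) (_ : NormedAddCommGroup Ht) (_ : InnerProductSpace ℂ Ht)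
      (_ : CompleteSpace Ht) (Et : Set Ω → (Ht →L[ℂ] Ht))
      (T : H →L[ℂ] Ht) (S : Ht →L[ℂ] H),
      IsProjectionValuedProbabilityMeasure Et ∧
      ∀ B : Set Ω, MeasurableSet B → E B = S.comp ((Et B).comp T)) :
    ∃ (K : Type u) (_ : NormedAddCommGroup K) (_ : InnerProductSpace ℂ K)
      (_ : CompleteSpace K) (V : H →ₗᵢ[ℂ] K) (F : Set Ω → (K →L[ℂ] K)),
      IsProjectionValuedProbabilityMeasure F ∧
      ∀ B : Set Ω, MeasurableSet B →
        E B = (ContinuousLinearMap.adjoint V.toContinuousLinearMap).comp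
          ((F B).comp V.toContinuousLinearMap) := by
  obtain ⟨Ht, _, _, _, Et, T, S, hEt, hdil⟩ := h_dil
  have hST : Function.LeftInverse S T := fun h => by
    simpa [hprob, hEt.2.1] using congr($(hdil _ .univ) h).symm
  obtain ⟨P, hP⟩ : ∃ P : Set Ω → (H →L[ℂ] H), IsProjectionValuedProbabilityMeasure P := by
    rcases isEmpty_or_nonempty Ω with _ | ⟨⟨ω₀⟩⟩
    · have := hEt.subsingleton
      have := hST.injective.subsingleton
      exact ⟨0, isProjectionValuedProbabilityMeasure_of_subsingleton 0⟩
    · exact ⟨_, isProjectionValuedProbabilityMeasure_indicator ω₀⟩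
  refine ⟨WithLp 2 (H × Ht), inferInstance, inferInstance, inferInstance, prodL2Inl,
    isometricDilation hST P Et, isProjectionValuedProbabilityMeasure_isometricDilation hST hP hEt,
    fun B hB => ?_⟩
  rw [adjoint_prodL2Inl_comp_isometricDilation_comp_prodL2Inl, hdil B hB]

/-- **Improving Hilbert dilations to isometric ones** (Han–Larson–Liu–Liu).
If an operator-valued probability measure `E : Σ → B(H)` on a complex Hilbert space `H`
admits some Hilbert dilation system `(Ẽ, H̃, S, T)` with `E(B) = S Ẽ(B) T`, then it admits
a Hilbert dilation system `(F, K, V*, V)` in which `V : H → K` is an isometric embedding: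
`E(B) = V* F(B) V` for all `B ∈ Σ`. -/
theorem hilbert_dilation_improves_to_isometry
    {Ω : Type v} [MeasurableSpace Ω]
    {H : Type u} [NormedAddCommGroup H] [InnerProductSpace ℂ H] [CompleteSpace H]
    (E : Set Ω → (H →L[ℂ] H))
    (hE : IsOperatorValuedMeasure E)
    (hprob : E Set.univ = ContinuousLinearMap.id ℂ H)
    (h_dil : ∃ (Ht : Type u) (_ : NormedAddCommGroup Ht) (_ : InnerProductSpace ℂ Ht)
      (_ : CompleteSpace Ht) (Et : Set Ω → (Ht →L[ℂ] Ht))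
      (T : H →L[ℂ] Ht) (S : Ht →L[ℂ] H),
      IsProjectionValuedProbabilityMeasure Et ∧
      ∀ B : Set Ω, MeasurableSet B → E B = S.comp ((Et B).comp T)) :
    ∃ (K : Type u) (_ : NormedAddCommGroup K) (_ : InnerProductSpace ℂ K)
      (_ : CompleteSpace K) (V : H →ₗᵢ[ℂ] K) (F : Set Ω → (K →L[ℂ] K)),
      IsProjectionValuedProbabilityMeasure F ∧
      ∀ B : Set Ω, MeasurableSet B →
        E B = (ContinuousLinearMap.adjoint V.toContinuousLinearMap).comp
          ((F B).comp V.toContinuousLinearMap) :=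
  hilbert_dilation_improves_to_isometry_general E hprob h_dil
end

section
/- Let (x_i, y_i)_{i∈ℕ} be a framing for a separable complex Hilbert space H such that inf_i ‖x_i‖·‖y_i‖ > 0. Then there exist scalars α_i, β_i ∈ ℂ with α_i·conj(β_i) = 1 for all i such that (α_i x_i)_{i∈ℕ} and (β_i y_i)_{i∈ℕ} are both frames for H. -/
universe u

/-- A sequence `(zᵢ)` in a complex Hilbert space is a frame if there are constants
`0 < A ≤ B < ∞` with `A‖v‖² ≤ ∑ᵢ |⟨v, zᵢ⟩|² ≤ B‖v‖²` for all `v`. -/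
def IsFrame {H : Type*} [NormedAddCommGroup H] [InnerProductSpace ℂ H]
    (z : ℕ → H) : Prop :=
  ∃ A B : ℝ, 0 < A ∧ A ≤ B ∧ ∀ v : H,
    Summable (fun n : ℕ => ‖(inner ℂ v (z n) : ℂ)‖ ^ 2) ∧
    A * ‖v‖ ^ 2 ≤ ∑' n : ℕ, ‖(inner ℂ v (z n) : ℂ)‖ ^ 2 ∧
    ∑' n : ℕ, ‖(inner ℂ v (z n) : ℂ)‖ ^ 2 ≤ B * ‖v‖ ^ 2

/-!
By Banach–Steinhaus, the partial-sum operators `∑_{i ∈ s} ⟨yᵢ, ·⟩ xᵢ` of the framing are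
uniformly bounded, and so are their adjoints `∑_{i ∈ s} ⟨xᵢ, ·⟩ yᵢ`. Choosing signs by the
parallelogram law turns this into the square-function bounds `∑ |⟨yᵢ, v⟩|² ‖xᵢ‖² ≲ ‖v‖²` and
`∑ |⟨xᵢ, v⟩|² ‖yᵢ‖² ≲ ‖v‖²`. For `αᵢ = √(‖yᵢ‖ / ‖xᵢ‖) = 1 / βᵢ`, the condition
`‖xᵢ‖ ‖yᵢ‖ ≥ c` makes these upper frame bounds for `(αᵢ xᵢ)` and `(βᵢ yᵢ)`. The rescaled pair is
still a framing, and Cauchy–Schwarz in `‖v‖² = ∑ ⟨βᵢ yᵢ, v⟩ ⟨v, αᵢ xᵢ⟩` turns the upper bound of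
each sequence into a lower bound for the other.
-/

open scoped InnerProductSpace ComplexConjugate
open InnerProductSpace

theorem Summable.exists_norm_finset_sum_le {ι E : Type*} [SeminormedAddCommGroup E]
    {f : ι → E} (hf : Summable f) : ∃ C, ∀ s : Finset ι, ‖∑ i ∈ s, f i‖ ≤ C := by
  classical
  obtain ⟨s₀, hs₀⟩ := cauchySeq_finset_iff_vanishing_norm.1 hf.hasSum.cauchySeq 1 one_pos
  refine ⟨∑ i ∈ s₀, ‖f i‖ + 1, fun s => ?_⟩
  rw [← Finset.sum_inter_add_sum_sdiff s s₀]
  refine (norm_add_le _ _).trans (add_le_add ?_ (hs₀ _ Finset.sdiff_disjoint).le)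
  exact (norm_sum_le _ _).trans <| Finset.sum_le_sum_of_subset_of_nonneg
    Finset.inter_subset_right fun i _ _ => norm_nonneg (f i)

theorem ContinuousLinearMap.exists_norm_finset_sum_le_of_summable_apply
    {ι 𝕜 E F : Type*} [NontriviallyNormedField 𝕜] [NormedAddCommGroup E] [NormedSpace 𝕜 E]
    [CompleteSpace E] [NormedAddCommGroup F] [NormedSpace 𝕜 F] {T : ι → E →L[𝕜] F}
    (hT : ∀ v, Summable fun i => T i v) : ∃ C, ∀ s : Finset ι, ‖∑ i ∈ s, T i‖ ≤ C :=
  banach_steinhaus fun v => by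
    simpa only [_root_.sum_apply] using (hT v).exists_norm_finset_sum_le

/-- A choice of signs `εᵢ = ±1` with `∑ ‖uᵢ‖² ≤ ‖∑ εᵢ uᵢ‖²`, encoded by the set `t` where
`εᵢ = 1`. -/
theorem exists_subset_sum_norm_sq_le {ι F : Type*} (𝕜 : Type*) [RCLike 𝕜]
    [NormedAddCommGroup F] [InnerProductSpace 𝕜 F] (u : ι → F) (s : Finset ι) :
    ∃ t ⊆ s, ∑ i ∈ s, ‖u i‖ ^ 2 ≤ ‖2 • ∑ i ∈ t, u i - ∑ i ∈ s, u i‖ ^ 2 := by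
  classical
  induction s using Finset.induction_on with
  | empty => exact ⟨∅, subset_rfl, by simp⟩
  | @insert a s ha ih =>
    obtain ⟨t, hts, ht⟩ := ih
    set w := 2 • ∑ i ∈ t, u i - ∑ i ∈ s, u i with hw
    have hat : a ∉ t := fun h => ha (hts h)
    -- by the parallelogram law, one of `w ± u a` has squared norm `≥ ‖w‖² + ‖u a‖²`
    have hpar := parallelogram_law_with_norm 𝕜 w (u a)
    rw [Finset.sum_insert ha]
    by_cases hle : ‖w‖ ^ 2 + ‖u a‖ ^ 2 ≤ ‖w + u a‖ ^ 2
    · refine ⟨insert a t, Finset.insert_subset_insert a hts, ?_⟩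
      have : 2 • ∑ i ∈ insert a t, u i - ∑ i ∈ insert a s, u i = w + u a := by
        rw [Finset.sum_insert hat, Finset.sum_insert ha, hw]; abel
      rw [this]; linarith
    · refine ⟨t, hts.trans (Finset.subset_insert a s), ?_⟩
      have : 2 • ∑ i ∈ t, u i - ∑ i ∈ insert a s, u i = w - u a := by
        rw [Finset.sum_insert ha, hw]; abel
      rw [this]; linarith

section RCLike

variable {ι 𝕜 E F : Type*} [RCLike 𝕜] [NormedAddCommGroup E] [InnerProductSpace 𝕜 E]
  [NormedAddCommGroup F] [InnerProductSpace 𝕜 F]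

theorem sum_norm_sq_apply_le {T : ι → E →L[𝕜] F} {C : ℝ} (hC : ∀ s, ‖∑ i ∈ s, T i‖ ≤ C)
    (v : E) (s : Finset ι) : ∑ i ∈ s, ‖T i v‖ ^ 2 ≤ (3 * C * ‖v‖) ^ 2 := by
  obtain ⟨t, -, hst⟩ := exists_subset_sum_norm_sq_le 𝕜 (fun i => T i v) s
  have hsum : ∀ r, ‖∑ i ∈ r, T i v‖ ≤ C * ‖v‖ := fun r => by
    simpa only [_root_.sum_apply] using
      (∑ i ∈ r, T i).le_of_opNorm_le (hC r) v
  refine hst.trans (pow_le_pow_left₀ (norm_nonneg _) ?_ 2)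
  calc ‖2 • ∑ i ∈ t, T i v - ∑ i ∈ s, T i v‖
      ≤ 2 * ‖∑ i ∈ t, T i v‖ + ‖∑ i ∈ s, T i v‖ := by
        refine (norm_sub_le _ _).trans ?_
        gcongr
        simpa using norm_nsmul_le (n := 2) (a := ∑ i ∈ t, T i v)
    _ ≤ 3 * C * ‖v‖ := by linarith [hsum t, hsum s]

variable (𝕜) in
def HasBesselBound (z : ι → E) (B : ℝ) : Prop :=
  ∀ v, Summable (fun i => ‖⟪v, z i⟫_𝕜‖ ^ 2) ∧ ∑' i, ‖⟪v, z i⟫_𝕜‖ ^ 2 ≤ B * ‖v‖ ^ 2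

theorem hasBesselBound_of_norm_inner_sq_le {T : ι → E →L[𝕜] F} {C c : ℝ}
    (hC : ∀ s, ‖∑ i ∈ s, T i‖ ≤ C) (hc : 0 < c) {z : ι → E}
    (hz : ∀ v i, ‖⟪v, z i⟫_𝕜‖ ^ 2 ≤ ‖T i v‖ ^ 2 / c) :
    HasBesselBound 𝕜 z ((3 * C) ^ 2 / c) := by
  intro v
  have hpartial : ∀ s : Finset ι, ∑ i ∈ s, ‖⟪v, z i⟫_𝕜‖ ^ 2 ≤ (3 * C) ^ 2 / c * ‖v‖ ^ 2 :=
    fun s => calc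
      ∑ i ∈ s, ‖⟪v, z i⟫_𝕜‖ ^ 2 ≤ (∑ i ∈ s, ‖T i v‖ ^ 2) / c := by
        rw [Finset.sum_div]; exact Finset.sum_le_sum fun i _ => hz v i
      _ ≤ (3 * C * ‖v‖) ^ 2 / c := by gcongr; exact sum_norm_sq_apply_le hC v s
      _ = (3 * C) ^ 2 / c * ‖v‖ ^ 2 := by ring
  have hsum := summable_of_sum_le (fun i => by positivity) hpartial
  exact ⟨hsum, hsum.tsum_le_of_sum_le hpartial⟩

theorem norm_pow_four_le_tsum_mul_tsum {u w : ι → E} {v : E}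
    (hv : HasSum (fun i => ⟪w i, v⟫_𝕜 • u i) v) (hu : Summable fun i => ‖⟪v, u i⟫_𝕜‖ ^ 2)
    (hw : Summable fun i => ‖⟪v, w i⟫_𝕜‖ ^ 2) :
    ‖v‖ ^ 4 ≤ (∑' i, ‖⟪v, u i⟫_𝕜‖ ^ 2) * ∑' i, ‖⟪v, w i⟫_𝕜‖ ^ 2 := by
  have hinner : HasSum (fun i => ⟪w i, v⟫_𝕜 * ⟪v, u i⟫_𝕜) ⟪v, v⟫_𝕜 := by
    simpa only [innerSL_apply_apply, inner_smul_right] using hv.mapL (innerSL 𝕜 v)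
  have hlim := ((continuous_norm.pow 2).tendsto _).comp hinner
  rw [show ‖v‖ ^ 4 = ‖⟪v, v⟫_𝕜‖ ^ 2 by
    rw [inner_self_eq_norm_sq_to_K, norm_pow, RCLike.norm_ofReal, abs_norm, ← pow_mul]]
  refine le_of_tendsto' hlim fun s => ?_
  calc ‖∑ i ∈ s, ⟪w i, v⟫_𝕜 * ⟪v, u i⟫_𝕜‖ ^ 2
      ≤ (∑ i ∈ s, ‖⟪v, u i⟫_𝕜‖ * ‖⟪v, w i⟫_𝕜‖) ^ 2 := by
        gcongr
        refine (norm_sum_le _ _).trans_eq (Finset.sum_congr rfl fun i _ => ?_)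
        rw [norm_mul, norm_inner_symm, mul_comm]
    _ ≤ (∑ i ∈ s, ‖⟪v, u i⟫_𝕜‖ ^ 2) * ∑ i ∈ s, ‖⟪v, w i⟫_𝕜‖ ^ 2 :=
        Finset.sum_mul_sq_le_sq_mul_sq _ _ _
    _ ≤ (∑' i, ‖⟪v, u i⟫_𝕜‖ ^ 2) * ∑' i, ‖⟪v, w i⟫_𝕜‖ ^ 2 :=
        mul_le_mul (hu.sum_le_tsum s fun i _ => by positivity)
          (hw.sum_le_tsum s fun i _ => by positivity) (by positivity)
          (tsum_nonneg fun i => by positivity)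

theorem hasSum_inner_smul_smul {x y : ι → E} {α β : ι → 𝕜} (hαβ : ∀ i, α i * conj (β i) = 1)
    {v : E} (hv : HasSum (fun i => ⟪y i, v⟫_𝕜 • x i) v) :
    HasSum (fun i => ⟪β i • y i, v⟫_𝕜 • α i • x i) v := by
  convert hv using 2 with i
  rw [inner_smul_left, smul_smul, ← mul_rotate, hαβ, one_mul]

theorem norm_inner_smul_sqrt_div_sq_le {x y v : E} {c : ℝ} (hc : 0 < c)
    (hxy : c ≤ ‖x‖ * ‖y‖) :
    ‖⟪v, ((√(‖y‖ / ‖x‖) : ℝ) : 𝕜) • x⟫_𝕜‖ ^ 2 ≤ ‖rankOne 𝕜 y x v‖ ^ 2 / c := by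
  rw [inner_smul_right, norm_mul, RCLike.norm_ofReal, abs_of_nonneg (Real.sqrt_nonneg _),
    mul_pow, Real.sq_sqrt (by positivity), rankOne_apply, norm_smul, mul_pow, norm_inner_symm]
  calc ‖y‖ / ‖x‖ * ‖⟪x, v⟫_𝕜‖ ^ 2 = ‖⟪x, v⟫_𝕜‖ ^ 2 * ‖y‖ ^ 2 / (‖x‖ * ‖y‖) := by
        field_simp
    _ ≤ ‖⟪x, v⟫_𝕜‖ ^ 2 * ‖y‖ ^ 2 / c := by gcongr

end RCLike

theorem isFrame_of_norm_pow_four_le {H : Type*} [NormedAddCommGroup H] [InnerProductSpace ℂ H]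
    {z z' : ℕ → H} {B : ℝ} (hz : HasBesselBound ℂ z B) (hz' : HasBesselBound ℂ z' B)
    (h : ∀ v, ‖v‖ ^ 4 ≤ (∑' i, ‖⟪v, z i⟫_ℂ‖ ^ 2) * ∑' i, ‖⟪v, z' i⟫_ℂ‖ ^ 2) :
    IsFrame z := by
  set B' := max B 1
  have hB : B ≤ B' := le_max_left B 1
  have hB1 : 1 ≤ B' := le_max_right B 1
  refine ⟨1 / B', B', by positivity, ?_, fun v => ⟨(hz v).1, ?_, ?_⟩⟩
  · rw [div_le_iff₀ (by positivity)]; nlinarith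
  · have hS : 0 ≤ ∑' i, ‖⟪v, z i⟫_ℂ‖ ^ 2 := tsum_nonneg fun i => by positivity
    suffices ‖v‖ ^ 2 ≤ B' * ∑' i, ‖⟪v, z i⟫_ℂ‖ ^ 2 by
      rw [one_div_mul_eq_div, div_le_iff₀ (by positivity)]; linarith
    rcases (norm_nonneg v).eq_or_lt with hv | hv
    · rw [← hv, sq, zero_mul]; positivity
    refine le_of_mul_le_mul_right ?_ (pow_pos hv 2)
    calc ‖v‖ ^ 2 * ‖v‖ ^ 2 = ‖v‖ ^ 4 := by ring
      _ ≤ (∑' i, ‖⟪v, z i⟫_ℂ‖ ^ 2) * (B' * ‖v‖ ^ 2) :=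
        (h v).trans (mul_le_mul_of_nonneg_left ((hz' v).2.trans (by gcongr)) hS)
      _ = B' * (∑' i, ‖⟪v, z i⟫_ℂ‖ ^ 2) * ‖v‖ ^ 2 := by ring
  · exact (hz v).2.trans (by gcongr)

theorem framing_rescalable_of_inf_norm_pos_general
    {H : Type u} [NormedAddCommGroup H] [InnerProductSpace ℂ H] [CompleteSpace H]
    (x y : ℕ → H)
    (h_framing : ∀ v : H, HasSum (fun i : ℕ => (inner ℂ (y i) v : ℂ) • x i) v)
    (h_inf : ∃ c : ℝ, 0 < c ∧ ∀ i : ℕ, c ≤ ‖x i‖ * ‖y i‖) :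
    ∃ α β : ℕ → ℂ, (∀ i, α i * starRingEnd ℂ (β i) = 1) ∧
      IsFrame (fun i => α i • x i) ∧ IsFrame (fun i => β i • y i) := by
  obtain ⟨c, hc, hxy⟩ := h_inf
  obtain ⟨C, hC⟩ := ContinuousLinearMap.exists_norm_finset_sum_le_of_summable_apply
    (T := fun i => rankOne ℂ (x i) (y i)) fun v => (h_framing v).summable
  have hC' : ∀ s : Finset ℕ, ‖∑ i ∈ s, rankOne ℂ (y i) (x i)‖ ≤ C := fun s => by
    rw [← (ContinuousLinearMap.adjoint).norm_map]
    simpa only [map_sum, adjoint_rankOne] using hC s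
  set α : ℕ → ℂ := fun i => ((√(‖y i‖ / ‖x i‖) : ℝ) : ℂ)
  set β : ℕ → ℂ := fun i => ((√(‖x i‖ / ‖y i‖) : ℝ) : ℂ)
  have hαβ : ∀ i, α i * conj (β i) = 1 := fun i => by
    obtain ⟨hx, hy⟩ := mul_ne_zero_iff.mp (hc.trans_le (hxy i)).ne'
    rw [Complex.conj_ofReal, ← Complex.ofReal_mul, ← Real.sqrt_mul (by positivity),
      show ‖y i‖ / ‖x i‖ * (‖x i‖ / ‖y i‖) = 1 by field_simp, Real.sqrt_one,
      Complex.ofReal_one]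
  have hα := hasBesselBound_of_norm_inner_sq_le hC' hc
    (z := fun i => α i • x i) fun v i => norm_inner_smul_sqrt_div_sq_le hc (hxy i)
  have hβ := hasBesselBound_of_norm_inner_sq_le hC hc
    (z := fun i => β i • y i) fun v i =>
      norm_inner_smul_sqrt_div_sq_le hc ((hxy i).trans_eq (mul_comm _ _))
  have hfour := fun v => norm_pow_four_le_tsum_mul_tsum
    (hasSum_inner_smul_smul hαβ (h_framing v)) ((hα v).1) ((hβ v).1)
  exact ⟨α, β, hαβ, isFrame_of_norm_pow_four_le hα hβ hfour,
    isFrame_of_norm_pow_four_le hβ hα fun v => (hfour v).trans_eq (mul_comm _ _)⟩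

/-- **Rescaling framings with `inf ‖xᵢ‖‖yᵢ‖ > 0` to pairs of frames**
(Han–Larson–Liu–Liu).  If `(xᵢ, yᵢ)` is a framing of a separable complex Hilbert space
`H` with `inf_i ‖xᵢ‖·‖yᵢ‖ > 0`, then there are scalars `αᵢ, βᵢ ∈ ℂ` with `αᵢ β̄ᵢ = 1`
such that `(αᵢ xᵢ)` and `(βᵢ yᵢ)` are both frames for `H`. -/
theorem framing_rescalable_of_inf_norm_pos
    {H : Type u} [NormedAddCommGroup H] [InnerProductSpace ℂ H] [CompleteSpace H]
    [TopologicalSpace.SeparableSpace H]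
    (x y : ℕ → H)
    (h_framing : ∀ v : H, HasSum (fun i : ℕ => (inner ℂ (y i) v : ℂ) • x i) v)
    (h_inf : ∃ c : ℝ, 0 < c ∧ ∀ i : ℕ, c ≤ ‖x i‖ * ‖y i‖) :
    ∃ α β : ℕ → ℂ, (∀ i, α i * starRingEnd ℂ (β i) = 1) ∧
      IsFrame (fun i => α i • x i) ∧ IsFrame (fun i => β i • y i) :=
  framing_rescalable_of_inf_norm_pos_general x y h_framing h_inf
end
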